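/- Let G be a graph of NLC-width at most t. Then the 2VC-dimension of the hypergraph of balls in G is at most 6t+2: there is no set S of 6t+3 vertices such that for all distinct s₁,s₂ ∈ S some ball B in G satisfies B ∩ S = {s₁,s₂}. -/

import Mathlib

/-- `y` is an ancestor of `x` in the tree `G` rooted at `root`:
`y` lies on every (the unique) root-`x` path. -/
def Ancestor {V : Type*} (G : SimpleGraph V) (root y x : V) : Prop :=
  ∀ p : G.Walk root x, p.IsPath → y ∈ p.support

/-- `z` is the lowest common ancestor of `x` and `y`. -/
def IsLCA {V : Type*} (G : SimpleGraph V) (root x y z : V) : Prop :=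
  Ancestor G root z x ∧ Ancestor G root z y ∧
    ∀ w, Ancestor G root w x → Ancestor G root w y → Ancestor G root w z

/-- Extended shortest-path distance in a graph (`⊤` if unreachable). -/
noncomputable def eDist {V : Type*} (G : SimpleGraph V) (u v : V) : ℕ∞ :=
  sInf {n : ℕ∞ | ∃ p : G.Walk u v, n = (p.length : ℕ∞)}

set_option linter.unusedSectionVars false
set_option maxHeartbeats 1000000

namespace Stmt15Aux

open SimpleGraph Walk

variable {V : Type*} [DecidableEq V] {G : SimpleGraph V} {root : V}

noncomputable def pathTo (hT : G.IsTree) (root v : V) : G.Walk root v :=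
  (hT.existsUnique_path root v).exists.choose

lemma pathTo_isPath (hT : G.IsTree) (root v : V) : (pathTo hT root v).IsPath :=
  (hT.existsUnique_path root v).exists.choose_spec

lemma path_eq (hT : G.IsTree) {root v : V} (p : G.Walk root v) (hp : p.IsPath) :
    p = pathTo hT root v :=
  (hT.existsUnique_path root v).unique hp (pathTo_isPath hT root v)

lemma anc_iff (hT : G.IsTree) {root y v : V} :
    Ancestor G root y v ↔ y ∈ (pathTo hT root v).support := by
  constructor
  · intro h; exact h _ (pathTo_isPath hT root v)
  · intro h p hp; rwa [path_eq hT p hp]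

lemma anc_refl (root v : V) : Ancestor G root v v := fun p _ => p.end_mem_support

lemma anc_root (root v : V) : Ancestor G root root v := fun p _ => p.start_mem_support

lemma anc_trans {a b c : V} (hab : Ancestor G root a b) (hbc : Ancestor G root b c) :
    Ancestor G root a c := by
  intro p hp
  have hb := hbc p hp
  have := hab (p.takeUntil b hb) (hp.takeUntil hb)
  exact p.support_takeUntil_subset hb this

noncomputable def depth (hT : G.IsTree) (root v : V) : ℕ := (pathTo hT root v).length

lemma depth_lt (hT : G.IsTree) {u c : V} (h : Ancestor G root u c) (hne : u ≠ c) :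
    depth hT root u < depth hT root c := by
  have hm : u ∈ (pathTo hT root c).support := (anc_iff hT).1 h
  have hq : ((pathTo hT root c).takeUntil u hm).IsPath := (pathTo_isPath hT root c).takeUntil hm
  have hd : depth hT root u = ((pathTo hT root c).takeUntil u hm).length := by
    unfold depth; rw [← path_eq hT _ hq]
  rw [hd]
  have hle := (pathTo hT root c).length_takeUntil_le hm
  rcases lt_or_eq_of_le hle with h' | h'
  · exact h'
  · exfalso
    have hs := (pathTo hT root c).take_spec hm
    have := congrArg Walk.length hs
    rw [Walk.length_append, h'] at this
    have h0 : ((pathTo hT root c).dropUntil u hm).length = 0 := by omega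
    have := Walk.eq_of_length_eq_zero h0
    exact hne this

lemma anc_antisymm (hT : G.IsTree) {a b : V} (hab : Ancestor G root a b)
    (hba : Ancestor G root b a) : a = b := by
  by_contra hne
  exact absurd (depth_lt hT hba (Ne.symm hne)) (not_lt_of_gt (depth_lt hT hab hne))

end Stmt15Aux

namespace Stmt15Aux
open SimpleGraph Walk
set_option linter.unusedSectionVars false

variable {V : Type*} [DecidableEq V] {G : SimpleGraph V} {root : V}

lemma anc_total (hT : G.IsTree) {a b x : V} (hax : Ancestor G root a x)
    (hbx : Ancestor G root b x) : Ancestor G root a b ∨ Ancestor G root b a := by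
  set p := pathTo hT root x with hpdef
  have hp : p.IsPath := pathTo_isPath hT root x
  have hb : b ∈ p.support := (anc_iff hT).1 hbx
  have ha : a ∈ p.support := (anc_iff hT).1 hax
  set q := p.takeUntil b hb with hq
  have hqp : q.IsPath := hp.takeUntil hb
  by_cases haq : a ∈ q.support
  · left
    rw [anc_iff hT, ← path_eq hT q hqp]
    exact haq
  · right
    set d := p.dropUntil b hb with hd
    have hdp : d.IsPath := hp.dropUntil hb
    have hsupp : p.support = q.support ++ d.support.tail := by
      conv_lhs => rw [← take_spec p hb]
      exact support_append q d
    have had : a ∈ d.support := by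
      have ha' : a ∈ q.support ++ d.support.tail := hsupp ▸ ha
      rcases List.mem_append.1 ha' with h | h
      · exact absurd h haq
      · exact List.mem_of_mem_tail h
    set e := d.takeUntil a had with he
    have hep : e.IsPath := hdp.takeUntil had
    have hde : d.support = e.support ++ (d.dropUntil a had).support.tail := by
      conv_lhs => rw [← take_spec d had]
      exact support_append _ _
    have htail : e.support.tail ++ (d.dropUntil a had).support.tail = d.support.tail := by
      rw [hde, List.tail_append_of_ne_nil (support_ne_nil _)]
    have hnodup : (q.support ++ e.support.tail).Nodup := by
      have h1 : List.Sublist (q.support ++ e.support.tail) (q.support ++ d.support.tail) := by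
        refine List.Sublist.append_left ?_ _
        rw [← htail]; exact List.sublist_append_left _ _
      exact h1.nodup (hsupp ▸ hp.support_nodup)
    have hpath : (q.append e).IsPath := by
      rw [isPath_def, support_append]; exact hnodup
    rw [anc_iff hT, ← path_eq hT (q.append e) hpath]
    rw [support_append]
    exact List.mem_append_left _ q.end_mem_support

lemma anc_succ (hT : G.IsTree) {u x : V} (h : Ancestor G root u x) (hne : u ≠ x) :
    ∃ c, G.Adj u c ∧ Ancestor G root u c ∧ Ancestor G root c x := by
  set p := pathTo hT root x with hpdef
  have hp : p.IsPath := pathTo_isPath hT root x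
  have hu : u ∈ p.support := (anc_iff hT).1 h
  set d := p.dropUntil u hu with hd
  have hsupp : p.support = (p.takeUntil u hu).support ++ d.support.tail := by
    conv_lhs => rw [← take_spec p hu]
    exact support_append _ _
  rcases dd : d with _ | ⟨hadj, d'⟩
  · exact absurd rfl hne
  · rename_i v'
    refine ⟨v', hadj, ?_, ?_⟩
    · -- path root → v : takeUntil u concat edge
      have hvtail : v' ∈ d.support.tail := by rw [dd]; simp
      have hvnot : v' ∉ (p.takeUntil u hu).support := by
        have hnd := hsupp ▸ hp.support_nodup
        exact fun hmem => (List.disjoint_of_nodup_append hnd) hmem hvtail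
      have hpath : ((p.takeUntil u hu).concat hadj).IsPath := by
        rw [isPath_def, support_concat]
        rw [← List.concat_eq_append]
        exact List.Nodup.concat hvnot (hp.takeUntil hu).support_nodup
      rw [anc_iff hT, ← path_eq hT _ hpath, support_concat]
      exact List.mem_append_left _ (end_mem_support _)
    · -- v ∈ p.support
      rw [anc_iff hT]
      have : v' ∈ d.support := by rw [dd]; simp
      exact p.support_dropUntil_subset hu this

lemma lca_setup (hT : G.IsTree) {u v : V} (h1 : ¬ Ancestor G root u v)
    (h2 : ¬ Ancestor G root v u) :
    ∃ z c₁ c₂, Ancestor G root z u ∧ Ancestor G root z v ∧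
      (∀ w, Ancestor G root w u → Ancestor G root w v → Ancestor G root w z) ∧
      G.Adj z c₁ ∧ Ancestor G root z c₁ ∧ Ancestor G root c₁ u ∧
      G.Adj z c₂ ∧ Ancestor G root z c₂ ∧ Ancestor G root c₂ v ∧ c₁ ≠ c₂ := by
  classical
  set CA : Set V := {w | Ancestor G root w u ∧ Ancestor G root w v} with hCA
  have hfin : CA.Finite := by
    apply Set.Finite.subset (List.finite_toSet (pathTo hT root u).support)
    intro w hw
    exact (anc_iff hT).1 hw.1
  have hne : CA.Nonempty := ⟨root, anc_root root u, anc_root root v⟩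
  obtain ⟨z, hzCA, hzmax⟩ := Set.Finite.exists_maximalFor (depth hT root) CA hfin hne
  have hmax : ∀ w ∈ CA, Ancestor G root w z := by
    intro w hw
    rcases anc_total hT hzCA.1 hw.1 with hzw | hwz
    · by_cases hzw' : z = w
      · subst hzw'; exact anc_refl root z
      · have := depth_lt hT hzw hzw'
        have heq := hzmax hw (le_of_lt this)
        omega
    · exact hwz
  have hzu : z ≠ u := fun he => h1 (he ▸ hzCA.2)
  have hzv : z ≠ v := fun he => h2 (he ▸ hzCA.1)
  obtain ⟨c₁, hc₁adj, hc₁anc, hc₁u⟩ := anc_succ hT hzCA.1 hzu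
  obtain ⟨c₂, hc₂adj, hc₂anc, hc₂v⟩ := anc_succ hT hzCA.2 hzv
  refine ⟨z, c₁, c₂, hzCA.1, hzCA.2, fun w hw1 hw2 => hmax w ⟨hw1, hw2⟩,
    hc₁adj, hc₁anc, hc₁u, hc₂adj, hc₂anc, hc₂v, ?_⟩
  intro he
  subst he
  have : Ancestor G root c₁ z := hmax c₁ ⟨hc₁u, hc₂v⟩
  have := anc_antisymm hT this hc₁anc
  exact hc₁adj.ne this.symm

end Stmt15Aux

namespace Stmt15Aux
set_option linter.unusedSectionVars false
open SimpleGraph Walk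

variable {α : Type*} {Q : Type*} {G : SimpleGraph α}

lemma sInf_le_nat {s : Set ℕ∞} {r : ℕ∞} (hr : r ≠ ⊤) (h : sInf s ≤ r) :
    ∃ n ∈ s, n ≤ r := by
  by_contra hc
  push_neg at hc
  have h1 : r + 1 ≤ sInf s := le_sInf (fun n hn => ENat.add_one_le_iff hr |>.2 (hc n hn))
  have h2 : r + 1 ≤ r := le_trans h1 h
  have h3 : r < r + 1 := ENat.lt_add_one_iff hr |>.2 le_rfl
  exact absurd (lt_of_lt_of_le h3 h2) (lt_irrefl r)

lemma eDist_le_walk {u v : α} (p : G.Walk u v) : eDist G u v ≤ (p.length : ℕ∞) :=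
  sInf_le ⟨p, rfl⟩

lemma walk_of_eDist_le {u v : α} {r : ℕ∞} (hr : r ≠ ⊤) (h : eDist G u v ≤ r) :
    ∃ p : G.Walk u v, (p.length : ℕ∞) ≤ r := by
  obtain ⟨n, ⟨p, hp⟩, hle⟩ := sInf_le_nat hr h
  exact ⟨p, hp ▸ hle⟩

lemma eDist_comm {u v : α} : eDist G u v = eDist G v u := by
  have key : ∀ a b : α, eDist G a b ≤ eDist G b a := by
    intro a b
    apply le_sInf
    rintro n ⟨p, rfl⟩
    exact eDist_le_walk p.reverse |>.trans (by rw [length_reverse])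
  exact le_antisymm (key u v) (key v u)

noncomputable def mdist (G : SimpleGraph α) (X : Set α) (L : α → Q) (q : Q) (x : α) : ℕ∞ :=
  sInf {n | ∃ (x' : α) (w : G.Walk x x'), x' ∈ X ∧ L x' = q ∧ n = (w.length : ℕ∞)}

noncomputable def edistOut (G : SimpleGraph α) (X : Set α) (L : α → Q) (q : Q) (y : α) : ℕ∞ :=
  sInf {n | ∃ (x' : α) (w : G.Walk x' y), x' ∈ X ∧ L x' = q ∧
    (∀ v ∈ w.support.tail, v ∉ X) ∧ n = (w.length : ℕ∞)}

lemma walk_split {X : Set α} : ∀ {c b : α} (w : G.Walk c b), b ∉ X →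
    (∀ v ∈ w.support, v ∉ X) ∨ ∃ x', x' ∈ X ∧ ∃ (w1 : G.Walk c x') (w2 : G.Walk x' b),
      (∀ v ∈ w2.support.tail, v ∉ X) ∧ w1.length + w2.length = w.length := by
  intro c b w
  induction w with
  | nil =>
    intro hb
    left
    intro v hv
    simp only [support_nil, List.mem_singleton] at hv
    subst hv; exact hb
  | cons h w' ih =>
    intro hb
    rcases ih hb with hall | ⟨x', hx', w1, w2, h2, hlen⟩
    · rename_i c' v' _
      by_cases hc : c' ∈ X
      · right
        refine ⟨c', hc, Walk.nil, Walk.cons h w', ?_, by simp⟩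
        intro v hv
        rw [support_cons] at hv
        exact hall v hv
      · left
        intro v hv
        rw [support_cons] at hv
        rcases List.mem_cons.1 hv with hv1 | hv1
        · subst hv1; exact hc
        · exact hall v hv1
    · right
      exact ⟨x', hx', Walk.cons h w1, w2, h2, by simp [hlen]; omega⟩

lemma D1 {X : Set α} {L : α → Q} {c b : α} (w : G.Walk c b) (hc : c ∈ X) (hb : b ∉ X) :
    ∃ q, mdist G X L q c + edistOut G X L q b ≤ (w.length : ℕ∞) := by
  rcases walk_split w hb with hall | ⟨x', hx', w1, w2, h2, hlen⟩
  · exact absurd hc (hall c w.start_mem_support)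
  · refine ⟨L x', ?_⟩
    have hm : mdist G X L (L x') c ≤ (w1.length : ℕ∞) := sInf_le ⟨x', w1, hx', rfl, rfl⟩
    have he : edistOut G X L (L x') b ≤ (w2.length : ℕ∞) := sInf_le ⟨x', w2, hx', rfl, h2, rfl⟩
    calc mdist G X L (L x') c + edistOut G X L (L x') b ≤ (w1.length : ℕ∞) + w2.length :=
          add_le_add hm he
      _ = ((w1.length + w2.length : ℕ) : ℕ∞) := by rw [Nat.cast_add]
      _ = (w.length : ℕ∞) := by rw [hlen]

lemma D2 {X : Set α} {L : α → Q}
    (hswap : ∀ x ∈ X, ∀ x' ∈ X, L x = L x' → ∀ y ∉ X, (G.Adj x y ↔ G.Adj x' y))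
    {c b : α} (q : Q) (hb : b ∉ X) :
    eDist G c b ≤ mdist G X L q c + edistOut G X L q b := by
  by_cases hm : mdist G X L q c = ⊤
  · rw [hm]; simp
  by_cases he : edistOut G X L q b = ⊤
  · rw [he]; simp
  obtain ⟨n1, ⟨x', w1, hx', hL1, hn1⟩, hle1⟩ := sInf_le_nat hm (le_refl (mdist G X L q c))
  obtain ⟨n2, ⟨x'', w2, hx'', hL2, htail, hn2⟩, hle2⟩ :=
    sInf_le_nat he (le_refl (edistOut G X L q b))
  rcases w2 with _ | ⟨hadj, w2'⟩
  · exact absurd hx'' hb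
  · rename_i v'
    have hv' : v' ∉ X := by
      apply htail
      rw [support_cons]
      exact w2'.start_mem_support
    have hadj' : G.Adj x' v' := (hswap x'' hx'' x' hx' (hL2.trans hL1.symm) v' hv').1 hadj
    have := eDist_le_walk (G := G) (w1.append (Walk.cons hadj' w2'))
    refine le_trans this ?_
    rw [length_append, length_cons, Nat.cast_add]
    rw [hn1] at hle1
    rw [hn2, length_cons] at hle2
    exact add_le_add hle1 hle2
end Stmt15Aux

/-- If `G` has an NLC-decomposition with at most `t` labels (i.e. NLC-width at
most `t`), then the hypergraph of balls in `G` has 2VC-dimension at most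
`6t + 2`: there is no 2-shattered set of `6t + 3` vertices. -/
theorem stmt15 {α N Q : Type*} [Fintype α] [Fintype N] [Fintype Q]
    (t : ℕ) (hQ : Fintype.card Q ≤ t)
    (G : SimpleGraph α)
    (TG : SimpleGraph N) (hTree : TG.IsTree) (root : N)
    (ι : α → N) (hι : Function.Injective ι)
    (hleaf : Set.range ι = {n | ∀ c, ¬ (TG.Adj n c ∧ Ancestor TG root n c)})
    (lab : α → Q) (β : N → N → Q → Q)
    (hβid : ∀ u, β u u = id)
    (hβcomp : ∀ u w v, Ancestor TG root u w → Ancestor TG root w v →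
      β u v = β u w ∘ β w v)
    (lc rc : N → Option N)
    (hchild : ∀ p c, (TG.Adj p c ∧ Ancestor TG root p c) ↔
      (lc p = some c ∨ rc p = some c))
    (R : N → Q → Q → Prop)
    (hAdj : ∀ x y : α, x ≠ y → ∀ z, IsLCA TG root (ι x) (ι y) z →
      ∀ cl cr, lc z = some cl → rc z = some cr →
        Ancestor TG root cl (ι x) → Ancestor TG root cr (ι y) →
        (G.Adj x y ↔ R z (β z (ι x) (lab x)) (β z (ι y) (lab y)))) :
    ¬ ∃ S : Set α, S.ncard = 6 * t + 3 ∧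
      ∀ s₁ ∈ S, ∀ s₂ ∈ S, s₁ ≠ s₂ →
        ∃ (c : α) (r : ℕ), {v | eDist G c v ≤ (r : ℕ∞)} ∩ S = {s₁, s₂} := by
  classical
  open Stmt15Aux in
  rintro ⟨S, hScard, hshat⟩
  -- basic facts
  have hSfin : S.Finite := Set.toFinite S
  have hSne : S.Nonempty := by
    rw [← Set.ncard_pos hSfin, hScard]; omega
  obtain ⟨s₀, hs₀⟩ := hSne
  have ht1 : 1 ≤ t := le_trans (Fintype.card_pos_iff.2 ⟨lab s₀⟩) hQ
  -- leaf lemma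
  have hleafLem : ∀ (x : α) (w : N), Ancestor TG root (ι x) w → ι x = w := by
    intro x w hanc
    by_contra hne
    obtain ⟨c, hadj, hancc, -⟩ := anc_succ hTree hanc hne
    have hmem : ι x ∈ Set.range ι := ⟨x, rfl⟩
    rw [hleaf] at hmem
    exact hmem c ⟨hadj, hancc⟩
  -- descendant sets
  set Desc : N → Set α := fun w => {x | Ancestor TG root w (ι x)} with hDesc
  set W : Set N := {w | t + 1 ≤ (S ∩ Desc w).ncard} with hW
  have hrootW : root ∈ W := by
    have : S ∩ Desc root = S := by
      apply Set.inter_eq_left.2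
      intro x _
      exact anc_root root (ι x)
    simp only [hW, Set.mem_setOf_eq, this, hScard]
    omega
  obtain ⟨u, huW, humax⟩ :=
    Set.Finite.exists_maximalFor (depth hTree root) W (Set.toFinite W) ⟨root, hrootW⟩
  have hchildsmall : ∀ c, TG.Adj u c → Ancestor TG root u c → (S ∩ Desc c).ncard ≤ t := by
    intro c hadj hanc
    by_contra hcon
    push_neg at hcon
    have hcW : c ∈ W := by simp only [hW, Set.mem_setOf_eq]; omega
    have hlt := depth_lt hTree hanc hadj.ne
    have := humax hcW (le_of_lt hlt)
    omega
  set A : Set α := S ∩ Desc u with hA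
  set X : Set α := Desc u with hX
  have hAX : A ⊆ X := Set.inter_subset_right
  have hAS : A ⊆ S := Set.inter_subset_left
  have hAcard : t + 1 ≤ A.ncard := huW
  have hAle : A.ncard ≤ 2 * t := by
    by_cases huleaf : ∃ x₀ : α, ι x₀ = u
    · obtain ⟨x₀, hx₀⟩ := huleaf
      have hsub : A ⊆ {x₀} := by
        intro x hx
        have : Ancestor TG root (ι x₀) (ι x) := hx₀ ▸ hx.2
        have := hleafLem x₀ (ι x) this
        exact hι this.symm
      have := Set.ncard_le_ncard hsub (Set.finite_singleton x₀)
      rw [Set.ncard_singleton] at this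
      omega
    · set AL : Set α := {x ∈ A | ∃ c, lc u = some c ∧ Ancestor TG root c (ι x)} with hAL
      set AR : Set α := {x ∈ A | ∃ c, rc u = some c ∧ Ancestor TG root c (ι x)} with hAR
      have hsub : A ⊆ AL ∪ AR := by
        intro x hx
        have hne : u ≠ ι x := fun he => huleaf ⟨x, he.symm⟩
        obtain ⟨c, hadj, hanc, hancx⟩ := anc_succ hTree hx.2 hne
        rcases (hchild u c).1 ⟨hadj, hanc⟩ with h | h
        · exact Or.inl ⟨hx, c, h, hancx⟩
        · exact Or.inr ⟨hx, c, h, hancx⟩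
      have hLle : AL.ncard ≤ t := by
        rcases h : lc u with _ | c
        · have : AL = ∅ := by
            ext x
            simp only [hAL, Set.mem_setOf_eq, Set.mem_empty_iff_false, iff_false, not_and]
            rintro - ⟨c, hc, -⟩
            rw [h] at hc; exact absurd hc (by simp)
          simp [this]
        · have hsub' : AL ⊆ S ∩ Desc c := by
            rintro x ⟨hxA, c', hc', hancx⟩
            rw [h] at hc'
            have : c = c' := by injection hc'
            exact ⟨hxA.1, this ▸ hancx⟩
          have hc := (hchild u c).2 (Or.inl h)
          exact le_trans (Set.ncard_le_ncard hsub' (Set.toFinite _))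
            (hchildsmall c hc.1 hc.2)
      have hRle : AR.ncard ≤ t := by
        rcases h : rc u with _ | c
        · have : AR = ∅ := by
            ext x
            simp only [hAR, Set.mem_setOf_eq, Set.mem_empty_iff_false, iff_false, not_and]
            rintro - ⟨c, hc, -⟩
            rw [h] at hc; exact absurd hc (by simp)
          simp [this]
        · have hsub' : AR ⊆ S ∩ Desc c := by
            rintro x ⟨hxA, c', hc', hancx⟩
            rw [h] at hc'
            have : c = c' := by injection hc'
            exact ⟨hxA.1, this ▸ hancx⟩
          have hc := (hchild u c).2 (Or.inr h)
          exact le_trans (Set.ncard_le_ncard hsub' (Set.toFinite _))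
            (hchildsmall c hc.1 hc.2)
      calc A.ncard ≤ (AL ∪ AR).ncard := Set.ncard_le_ncard hsub (Set.toFinite _)
        _ ≤ AL.ncard + AR.ncard := Set.ncard_union_le _ _
        _ ≤ 2 * t := by omega
  set B : Set α := S \ Desc u with hB
  have hBS : B ⊆ S := Set.diff_subset
  have hBX : ∀ b ∈ B, b ∉ X := fun b hb => hb.2
  have hBcard : t + 1 ≤ B.ncard := by
    have : B = S \ A := by
      rw [hA, Set.diff_self_inter]
    rw [this, Set.ncard_diff hAS, hScard]
    omega
  -- the labelling at u
  set L : α → Q := fun x => β u (ι x) (lab x) with hL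
  -- swap lemma
  have hswap : ∀ x ∈ X, ∀ x' ∈ X, L x = L x' → ∀ y ∉ X, (G.Adj x y ↔ G.Adj x' y) := by
    intro x hx x' hx' hLxx' y hy
    have hy' : ¬ Ancestor TG root u (ι y) := hy
    have hyu : ¬ Ancestor TG root (ι y) u := by
      intro hcon
      have := hleafLem y u hcon
      exact hy' (this ▸ anc_refl root (ι y))
    obtain ⟨z, c₁, c₂, hzu, hzy, hzmax, hc₁adj, hc₁anc, hc₁u, hc₂adj, hc₂anc, hc₂y, hc₁₂⟩ :=
      lca_setup hTree hy' hyu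
    have hzx : Ancestor TG root z (ι x) := anc_trans hzu hx
    have hzx' : Ancestor TG root z (ι x') := anc_trans hzu hx'
    have hc₁x : Ancestor TG root c₁ (ι x) := anc_trans hc₁u hx
    have hc₁x' : Ancestor TG root c₁ (ι x') := anc_trans hc₁u hx'
    have hmaxgen : ∀ (w : N) (xx : α), xx ∈ X → Ancestor TG root w (ι xx) →
        Ancestor TG root w (ι y) → Ancestor TG root w z := by
      intro w xx hxx hw1 hw2
      rcases anc_total hTree (hxx : Ancestor TG root u (ι xx)) hw1 with huw | hwu
      · exact absurd (anc_trans huw hw2) hy'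
      · exact hzmax w hwu hw2
    have hlcax : IsLCA TG root (ι x) (ι y) z :=
      ⟨hzx, hzy, fun w h1 h2 => hmaxgen w x hx h1 h2⟩
    have hlcax' : IsLCA TG root (ι x') (ι y) z :=
      ⟨hzx', hzy, fun w h1 h2 => hmaxgen w x' hx' h1 h2⟩
    have hlcayx : IsLCA TG root (ι y) (ι x) z :=
      ⟨hzy, hzx, fun w h1 h2 => hmaxgen w x hx h2 h1⟩
    have hlcayx' : IsLCA TG root (ι y) (ι x') z :=
      ⟨hzy, hzx', fun w h1 h2 => hmaxgen w x' hx' h2 h1⟩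
    have hxy : x ≠ y := fun he => hy (he ▸ hx)
    have hx'y : x' ≠ y := fun he => hy (he ▸ hx')
    have hβeq : β z (ι x) (lab x) = β z (ι x') (lab x') := by
      have e1 : β z (ι x) = β z u ∘ β u (ι x) := hβcomp z u (ι x) hzu hx
      have e2 : β z (ι x') = β z u ∘ β u (ι x') := hβcomp z u (ι x') hzu hx'
      rw [e1, e2]
      simp only [Function.comp_apply]
      rw [show β u (ι x) (lab x) = β u (ι x') (lab x') from hLxx']
    rcases (hchild z c₁).1 ⟨hc₁adj, hc₁anc⟩ with h1 | h1 <;>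
      rcases (hchild z c₂).1 ⟨hc₂adj, hc₂anc⟩ with h2 | h2
    · exact absurd (Option.some_injective N (h1.symm.trans h2)) hc₁₂
    · -- lc z = c₁, rc z = c₂
      rw [hAdj x y hxy z hlcax c₁ c₂ h1 h2 hc₁x hc₂y,
        hAdj x' y hx'y z hlcax' c₁ c₂ h1 h2 hc₁x' hc₂y, hβeq]
    · -- lc z = c₂, rc z = c₁
      rw [G.adj_comm x y, G.adj_comm x' y,
        hAdj y x hxy.symm z hlcayx c₂ c₁ h2 h1 hc₂y hc₁x,
        hAdj y x' hx'y.symm z hlcayx' c₂ c₁ h2 h1 hc₂y hc₁x', hβeq]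
    · exact absurd (Option.some_injective N (h1.symm.trans h2)) hc₁₂
  -- key cardinality bound
  have hcardQ : ∀ T : Set α, (∀ a ∈ T, ∃ q : Q, ∀ a'' ∈ T, a'' ≠ a →
      True) → True := fun _ _ => trivial
  clear hcardQ
  -- choose a ∈ A not a strict minimizer witness
  have hAex : ∃ a ∈ A, ∀ q : Q, ¬ (∀ a'' ∈ A, a'' ≠ a →
      mdist G X L q a < mdist G X L q a'') := by
    by_contra hcon
    push_neg at hcon
    have hinj : ∃ f : A → Q, Function.Injective f := by
      choose f hf using fun (a : A) => hcon a a.2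
      refine ⟨f, ?_⟩
      intro a₁ a₂ hq
      by_contra hne
      have hne' : (a₁ : α) ≠ (a₂ : α) := fun he => hne (Subtype.ext he)
      have h1 := hf a₁ a₂ a₂.2 hne'.symm
      have h2 := hf a₂ a₁ a₁.2 hne'
      rw [hq] at h1
      exact absurd h1 (not_lt_of_gt h2)
    obtain ⟨f, hf⟩ := hinj
    have : A.ncard ≤ Fintype.card Q := by
      rw [← Nat.card_coe_set_eq]
      calc Nat.card A ≤ Nat.card Q := Nat.card_le_card_of_injective f hf
        _ = Fintype.card Q := Nat.card_eq_fintype_card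
    omega
  have hBex : ∃ b ∈ B, ∀ q : Q, ¬ (∀ b'' ∈ B, b'' ≠ b →
      edistOut G X L q b < edistOut G X L q b'') := by
    by_contra hcon
    push_neg at hcon
    have hinj : ∃ f : B → Q, Function.Injective f := by
      choose f hf using fun (b : B) => hcon b b.2
      refine ⟨f, ?_⟩
      intro b₁ b₂ hq
      by_contra hne
      have hne' : (b₁ : α) ≠ (b₂ : α) := fun he => hne (Subtype.ext he)
      have h1 := hf b₁ b₂ b₂.2 hne'.symm
      have h2 := hf b₂ b₁ b₁.2 hne'
      rw [hq] at h1
      exact absurd h1 (not_lt_of_gt h2)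
    obtain ⟨f, hf⟩ := hinj
    have : B.ncard ≤ Fintype.card Q := by
      rw [← Nat.card_coe_set_eq]
      calc Nat.card B ≤ Nat.card Q := Nat.card_le_card_of_injective f hf
        _ = Fintype.card Q := Nat.card_eq_fintype_card
    omega
  obtain ⟨a, haA, haprop⟩ := hAex
  obtain ⟨b, hbB, hbprop⟩ := hBex
  have haX : a ∈ X := hAX haA
  have hbX' : b ∉ X := hBX b hbB
  have hab : a ≠ b := fun he => hbX' (he ▸ haX)
  obtain ⟨cc, r, hball⟩ := hshat a (hAS haA) b (hBS hbB) hab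
  have hmema : eDist G cc a ≤ (r : ℕ∞) := by
    have : a ∈ ({a, b} : Set α) := Or.inl rfl
    rw [← hball] at this
    exact this.1
  have hmemb : eDist G cc b ≤ (r : ℕ∞) := by
    have : b ∈ ({a, b} : Set α) := Or.inr rfl
    rw [← hball] at this
    exact this.1
  have hexcl : ∀ s ∈ S, s ≠ a → s ≠ b → ¬ eDist G cc s ≤ (r : ℕ∞) := by
    intro s hs hsa hsb hcon
    have : s ∈ {v | eDist G cc v ≤ (r : ℕ∞)} ∩ S := ⟨hcon, hs⟩
    rw [hball] at this
    rcases this with h | h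
    · exact hsa h
    · exact hsb h
  by_cases hcc : cc ∈ X
  · -- center inside: b is a strict minimizer for edistOut
    obtain ⟨w, hwlen⟩ := walk_of_eDist_le (by simp : (r : ℕ∞) ≠ ⊤) hmemb
    obtain ⟨q, hq⟩ := D1 (L := L) w hcc hbX'
    have hq' : mdist G X L q cc + edistOut G X L q b ≤ (r : ℕ∞) := le_trans hq hwlen
    apply hbprop q
    intro b'' hb'' hneb
    have hb''X : b'' ∉ X := hBX b'' hb''
    have hb''a : b'' ≠ a := fun he => hb''X (he ▸ haX)
    have hfar : ¬ eDist G cc b'' ≤ (r : ℕ∞) := hexcl b'' (hBS hb'') hb''a hneb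
    have hD2 := D2 (G := G) hswap (c := cc) q hb''X
    have hgt : (r : ℕ∞) < mdist G X L q cc + edistOut G X L q b'' :=
      lt_of_lt_of_le (not_le.1 hfar) hD2
    have hmne : mdist G X L q cc ≠ ⊤ := by
      intro he
      rw [he] at hq'
      simp at hq'
    have := lt_of_le_of_lt hq' hgt
    exact (WithTop.add_lt_add_iff_left hmne).1 this
  · -- center outside: a is a strict minimizer for mdist
    have hmema' : eDist G a cc ≤ (r : ℕ∞) := eDist_comm.symm ▸ hmema
    obtain ⟨w, hwlen⟩ := walk_of_eDist_le (by simp : (r : ℕ∞) ≠ ⊤) hmema'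
    obtain ⟨q, hq⟩ := D1 (L := L) w haX hcc
    have hq' : mdist G X L q a + edistOut G X L q cc ≤ (r : ℕ∞) := le_trans hq hwlen
    apply haprop q
    intro a'' ha'' hnea
    have ha''X : a'' ∈ X := hAX ha''
    have ha''b : a'' ≠ b := fun he => hbX' (he ▸ ha''X)
    have hfar : ¬ eDist G cc a'' ≤ (r : ℕ∞) := hexcl a'' (hAS ha'') hnea ha''b
    have hD2 := D2 (G := G) hswap (c := a'') q hcc
    have hgt : (r : ℕ∞) < mdist G X L q a'' + edistOut G X L q cc := by
      refine lt_of_lt_of_le (not_le.1 ?_) hD2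
      rw [eDist_comm]
      exact hfar
    have hene : edistOut G X L q cc ≠ ⊤ := by
      intro he
      rw [he] at hq'
      simp at hq'
    have := lt_of_le_of_lt hq' hgt
    exact (WithTop.add_lt_add_iff_right hene).1 this
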